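/- arXiv:1603.05359 — 3 statements merged into one kernel-verified Lean document; each statement's English description precedes it below -/
import Mathlib

section
/- Let σ > 0, d ≥ 1, and let x_1, x_2, ... , x_T be vectors in ℝ^d with ‖x_s‖₂ ≤ 1. Define M_0 = I_d and M_s = M_{s−1} + σ^{-2} x_s x_sᵀ, and set z_s = √(x_sᵀ M_{s−1}^{-1} x_s). Then ∑_{s=1}^T log(1 + z_s²/σ²) ≤ d · log(1 + T/(d σ²)). -/
/-!
By the matrix determinant lemma, `det M_s = det M_{s-1} * (1 + z_s ^ 2 / σ ^ 2)`, so the sum of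
logarithms telescopes to `log det M_T`. AM-GM on the eigenvalues of the positive definite `M_T`
gives `det M_T ≤ (trace M_T / d) ^ d`, and `trace M_T = d + σ⁻² ∑ ‖x_s‖² ≤ d + T / σ²`.
-/

open Matrix

open Finset in
theorem Real.prod_le_arith_mean_pow {ι : Type*} (s : Finset ι) {z : ι → ℝ}
    (hz : ∀ i ∈ s, 0 ≤ z i) : ∏ i ∈ s, z i ≤ ((∑ i ∈ s, z i) / #s) ^ #s := by
  rcases s.eq_empty_or_nonempty with rfl | hs
  · simp
  have amgm := Real.geom_mean_le_arith_mean s (fun _ ↦ 1) z (fun _ _ ↦ zero_le_one)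
    (by simpa using hs.card_pos) hz
  simp only [Real.rpow_one, sum_const, nsmul_eq_mul, mul_one, one_mul] at amgm
  calc ∏ i ∈ s, z i = ((∏ i ∈ s, z i) ^ ((#s : ℝ)⁻¹)) ^ #s :=
        (Real.rpow_inv_natCast_pow (prod_nonneg hz) hs.card_pos.ne').symm
    _ ≤ _ := pow_le_pow_left₀ (Real.rpow_nonneg (prod_nonneg hz) _) amgm _

namespace Matrix

variable {n : Type*} [Fintype n]

theorem det_add_vecMulVec [DecidableEq n] {R : Type*} [CommRing R] {A : Matrix n n R}
    (hA : IsUnit A.det) (u v : n → R) : (A + vecMulVec u v).det = A.det * (1 + v ⬝ᵥ A⁻¹ *ᵥ u) := by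
  rw [vecMulVec_eq Unit, det_add_replicateCol_mul_replicateRow hA, ← replicateRow_vecMul,
    det_unique (1 + _ : Matrix Unit Unit R), add_apply, one_apply_eq,
    replicateRow_mul_replicateCol_apply, dotProduct_mulVec]

theorem PosSemidef.det_le_trace_div_card_pow [DecidableEq n] {A : Matrix n n ℝ}
    (hA : A.PosSemidef) : A.det ≤ (A.trace / Fintype.card n) ^ Fintype.card n := by
  rw [hA.1.det_eq_prod_eigenvalues, hA.1.trace_eq_sum_eigenvalues, ← Finset.card_univ]
  exact Real.prod_le_arith_mean_pow _ fun i _ ↦ hA.eigenvalues_nonneg i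

theorem PosDef.log_det_le_card_mul_log [DecidableEq n] {A : Matrix n n ℝ} (hA : A.PosDef) {a : ℝ}
    (ha : A.trace / Fintype.card n ≤ a) : Real.log A.det ≤ Fintype.card n * Real.log a := by
  have h_mean_nonneg : 0 ≤ A.trace / Fintype.card n :=
    div_nonneg hA.posSemidef.trace_nonneg (Nat.cast_nonneg _)
  calc Real.log A.det ≤ Real.log (a ^ Fintype.card n) := by
        gcongr
        · exact hA.det_pos
        · exact hA.posSemidef.det_le_trace_div_card_pow.trans
            (pow_le_pow_left₀ h_mean_nonneg ha _)
    _ = Fintype.card n * Real.log a := Real.log_pow _ _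

theorem posDef_of_succ_eq_add_smul_vecMulVec {M : ℕ → Matrix n n ℝ} {x : ℕ → n → ℝ} {c : ℝ}
    (h0 : (M 0).PosDef) (hc : 0 ≤ c)
    (hM : ∀ s, M (s + 1) = M s + c • vecMulVec (x (s + 1)) (x (s + 1))) (s : ℕ) :
    (M s).PosDef := by
  induction s with
  | zero => exact h0
  | succ s ih =>
    rw [hM s]
    simpa using ih.add_posSemidef ((posSemidef_vecMulVec_self_star (x (s + 1))).smul hc)

section RankOneUpdates

variable {R : Type*} [CommRing R] {M : ℕ → Matrix n n R} {x : ℕ → n → R} {c : R}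

theorem det_eq_mul_prod_of_succ_eq_add_smul_vecMulVec [DecidableEq n]
    (hM_unit : ∀ s, IsUnit (M s).det)
    (hM : ∀ s, M (s + 1) = M s + c • vecMulVec (x (s + 1)) (x (s + 1))) (s : ℕ) :
    (M s).det = (M 0).det * ∏ t ∈ Finset.Icc 1 s, (1 + c * (x t ⬝ᵥ (M (t - 1))⁻¹ *ᵥ x t)) := by
  induction s with
  | zero => simp
  | succ s ih =>
    rw [hM s, ← vecMulVec_smul, det_add_vecMulVec (hM_unit s), ih,
      Finset.prod_Icc_succ_top (Nat.le_add_left 1 s), mul_assoc]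
    simp

theorem trace_eq_add_sum_of_succ_eq_add_smul_vecMulVec
    (hM : ∀ s, M (s + 1) = M s + c • vecMulVec (x (s + 1)) (x (s + 1))) (s : ℕ) :
    (M s).trace = (M 0).trace + c * ∑ t ∈ Finset.Icc 1 s, x t ⬝ᵥ x t := by
  induction s with
  | zero => simp
  | succ s ih =>
    rw [hM s, trace_add, trace_smul, trace_vecMulVec, ih,
      Finset.sum_Icc_succ_top (Nat.le_add_left 1 s), smul_eq_mul]
    ring

end RankOneUpdates

end Matrix

open Finset Real in
theorem sum_log_potential_bound_general (d T : ℕ) (σ : ℝ)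
    (x : ℕ → Fin d → ℝ) (hx : ∀ s ∈ Finset.Icc 1 T, Real.sqrt (x s ⬝ᵥ x s) ≤ 1)
    (M : ℕ → Matrix (Fin d) (Fin d) ℝ) (hM0 : M 0 = 1)
    (hMrec : ∀ s, M (s + 1) = M s + (σ ^ 2)⁻¹ • vecMulVec (x (s + 1)) (x (s + 1)))
    (z : ℕ → ℝ) (hz : ∀ s, z s = Real.sqrt (x s ⬝ᵥ (M (s - 1))⁻¹ *ᵥ x s)) :
    ∑ s ∈ Finset.Icc 1 T, Real.log (1 + (z s) ^ 2 / σ ^ 2) ≤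
      d * Real.log (1 + T / (d * σ ^ 2)) := by
  have hM_pd : ∀ s, (M s).PosDef :=
    posDef_of_succ_eq_add_smul_vecMulVec (hM0 ▸ PosDef.one) (by positivity) hMrec
  have hq (s : ℕ) : 0 ≤ x s ⬝ᵥ (M (s - 1))⁻¹ *ᵥ x s := by
    simpa using (hM_pd (s - 1)).posSemidef.inv.dotProduct_mulVec_nonneg (x s)
  have hz_sq (s : ℕ) : z s ^ 2 / σ ^ 2 = (σ ^ 2)⁻¹ * (x s ⬝ᵥ (M (s - 1))⁻¹ *ᵥ x s) := by
    rw [hz, sq_sqrt (hq s), div_eq_inv_mul]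
  have h_sum_eq_log_det : ∑ s ∈ Icc 1 T, log (1 + z s ^ 2 / σ ^ 2) = log (M T).det := by
    rw [det_eq_mul_prod_of_succ_eq_add_smul_vecMulVec (fun s ↦ (hM_pd s).det_pos.ne'.isUnit)
      hMrec, hM0, det_one, one_mul, log_prod fun s _ ↦ by have := hq s; positivity]
    simp_rw [hz_sq]
  have h_trace : (M T).trace ≤ d + T / σ ^ 2 := by
    have h_sum : ∑ t ∈ Icc 1 T, x t ⬝ᵥ x t ≤ T := by
      simpa using sum_le_card_nsmul _ _ 1 fun t ht ↦ sqrt_le_one.mp (hx t ht)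
    rw [trace_eq_add_sum_of_succ_eq_add_smul_vecMulVec hMrec, hM0, trace_one, Fintype.card_fin,
      div_eq_inv_mul]
    gcongr
  have h_mean : (M T).trace / d ≤ 1 + T / (d * σ ^ 2) :=
    calc (M T).trace / d ≤ (d + T / σ ^ 2) / d := by gcongr
      _ ≤ 1 + T / (d * σ ^ 2) := by
        rw [add_div, div_div, mul_comm (σ ^ 2)]
        gcongr
        exact div_self_le_one _ -- holds also for `d = 0`, where `0 / 0 = 0`
  rw [h_sum_eq_log_det]
  simpa using (hM_pd T).log_det_le_card_mul_log (by simpa using h_mean)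

theorem sum_log_potential_bound (d T : ℕ) (hd : 1 ≤ d) (σ : ℝ) (hσ : 0 < σ)
    (x : ℕ → Fin d → ℝ) (hx : ∀ s ∈ Finset.Icc 1 T, Real.sqrt (x s ⬝ᵥ x s) ≤ 1)
    (M : ℕ → Matrix (Fin d) (Fin d) ℝ) (hM0 : M 0 = 1)
    (hMrec : ∀ s, M (s + 1) = M s + (σ ^ 2)⁻¹ • vecMulVec (x (s + 1)) (x (s + 1)))
    (z : ℕ → ℝ) (hz : ∀ s, z s = Real.sqrt (x s ⬝ᵥ (M (s - 1))⁻¹ *ᵥ x s)) :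
    ∑ s ∈ Finset.Icc 1 T, Real.log (1 + (z s) ^ 2 / σ ^ 2) ≤
      d * Real.log (1 + T / (d * σ ^ 2)) :=
  sum_log_potential_bound_general d T σ x hx M hM0 hMrec z hz
end

section
/- Let σ > 0, d ≥ 1, and x_1,...,x_T ∈ ℝ^d with ‖x_s‖₂ ≤ 1. With M_0 = I_d, M_s = M_{s−1} + σ^{-2} x_s x_sᵀ, and z_s = √(x_sᵀ M_{s−1}^{-1} x_s), we have ∑_{s=1}^T z_s ≤ √(T · d·log(1 + T/(dσ²)) / log(1 + 1/σ²)). -/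
/-!
Since `M_{s-1} ≥ I`, each `z_s² = x_sᵀ M_{s-1}⁻¹ x_s` lies in `[0, ‖x_s‖²] ⊆ [0, 1]`, and the
matrix determinant lemma gives `det M_T = ∏ (1 + σ⁻² z_s²)`. Concavity of `log` on
`[1, 1 + σ⁻²]` yields `z_s² log (1 + σ⁻²) ≤ log (1 + σ⁻² z_s²)`, so
`(∑ z_s²) log (1 + σ⁻²) ≤ log det M_T`, while Jensen on the eigenvalues bounds
`log det M_T ≤ d log (tr M_T / d) ≤ d log (1 + T / (d σ²))`.
Cauchy–Schwarz turns the bound on `∑ z_s²` into one on `∑ z_s`.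
-/

open Matrix

theorem Matrix.PosSemidef.posDef_of_sub_one {n : Type*} [Fintype n] [DecidableEq n]
    {A : Matrix n n ℝ} (hA : (A - 1).PosSemidef) : A.PosDef := by
  simpa using PosDef.one.add_posSemidef hA

theorem Matrix.PosSemidef.dotProduct_inv_mulVec_le {n : Type*} [Fintype n] [DecidableEq n]
    {A : Matrix n n ℝ} (hA : (A - 1).PosSemidef) (x : n → ℝ) :
    x ⬝ᵥ A⁻¹ *ᵥ x ≤ x ⬝ᵥ x := by
  set y := A⁻¹ *ᵥ x
  set w := (A - 1) *ᵥ y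
  have hx : x = y + w := by
    simp [y, w, mulVec_mulVec, Matrix.sub_mul, sub_mulVec,
      mul_nonsing_inv _ hA.posDef_of_sub_one.det_pos.ne'.isUnit]
  have hyw : 0 ≤ y ⬝ᵥ w := by simpa using hA.dotProduct_mulVec_nonneg y
  have hww : 0 ≤ w ⬝ᵥ w := by simpa using dotProduct_star_self_nonneg w
  have : x ⬝ᵥ x - x ⬝ᵥ y = y ⬝ᵥ w + w ⬝ᵥ w := by
    rw [hx]; simp only [add_dotProduct, dotProduct_add, dotProduct_comm w y]; ring
  linarith

theorem Matrix.PosDef.dotProduct_inv_mulVec_nonneg {n : Type*} [Fintype n] [DecidableEq n]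
    {A : Matrix n n ℝ} (hA : A.PosDef) (x : n → ℝ) : 0 ≤ x ⬝ᵥ A⁻¹ *ᵥ x := by
  simpa using hA.inv.posSemidef.dotProduct_mulVec_nonneg x

theorem Matrix.PosDef.log_det_le {n : Type*} [Fintype n] [DecidableEq n] [Nonempty n]
    {A : Matrix n n ℝ} (hA : A.PosDef) :
    Real.log A.det ≤ Fintype.card n * Real.log (A.trace / Fintype.card n) := by
  have hn : (0 : ℝ) < Fintype.card n := by exact_mod_cast Fintype.card_pos
  have hjensen := strictConcaveOn_log_Ioi.concaveOn.le_map_sum (t := Finset.univ)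
    (w := fun _ => (Fintype.card n : ℝ)⁻¹) (p := hA.1.eigenvalues)
    (fun _ _ => by positivity) (by simp [hn.ne']) (fun i _ => hA.eigenvalues_pos i)
  simp only [smul_eq_mul, inv_mul_eq_div, ← Finset.sum_div] at hjensen
  rw [hA.1.det_eq_prod_eigenvalues, hA.1.trace_eq_sum_eigenvalues]
  simp only [RCLike.ofReal_real_eq_id, id]
  rw [Real.log_prod fun i _ => (hA.eigenvalues_pos i).ne', ← div_le_iff₀' hn]
  exact hjensen

theorem mul_log_one_add_le_log_one_add_mul {c u : ℝ} (hc : -1 < c) (hu₀ : 0 ≤ u)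
    (hu₁ : u ≤ 1) :
    u * Real.log (1 + c) ≤ Real.log (1 + c * u) := by
  have := strictConcaveOn_log_Ioi.concaveOn.2 (x := 1 + c) (y := 1)
    (by simp; linarith) (by simp) hu₀ (sub_nonneg.2 hu₁) (by ring)
  simp only [smul_eq_mul, Real.log_one, mul_zero, add_zero] at this
  rwa [show u * (1 + c) + (1 - u) * 1 = 1 + c * u by ring] at this

theorem Real.sum_sqrt_le_sqrt_card_mul_sum {ι : Type*} (s : Finset ι) {f : ι → ℝ}
    (hf : ∀ i, 0 ≤ f i) : ∑ i ∈ s, √(f i) ≤ √(s.card * ∑ i ∈ s, f i) := by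
  simpa [mul_comm] using Real.sum_sqrt_mul_sqrt_le s hf (fun _ => zero_le_one)

section RankOneUpdates

variable {ι : Type*} [Fintype ι] [DecidableEq ι] {c : ℝ} {x : ℕ → ι → ℝ}
  {M : ℕ → Matrix ι ι ℝ} (hM0 : M 0 = 1)
  (hMrec : ∀ s, M (s + 1) = M s + c • vecMulVec (x (s + 1)) (x (s + 1)))
include hM0 hMrec

theorem posSemidef_sub_one_of_rankOne_updates (hc : 0 ≤ c) (s : ℕ) : (M s - 1).PosSemidef := by
  induction s with
  | zero => simpa [hM0] using PosSemidef.zero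
  | succ s ih =>
    rw [hMrec, add_sub_right_comm]
    exact ih.add ((posSemidef_vecMulVec_self_star (x (s + 1))).smul hc)

theorem det_eq_prod_of_rankOne_updates (hc : 0 ≤ c) (n : ℕ) :
    (M n).det = ∏ s ∈ Finset.Icc 1 n, (1 + c * (x s ⬝ᵥ (M (s - 1))⁻¹ *ᵥ x s)) := by
  induction n with
  | zero => simp [hM0]
  | succ n ih =>
    have hdet := (posSemidef_sub_one_of_rankOne_updates hM0 hMrec hc n).posDef_of_sub_one.det_pos
    rw [Finset.prod_Icc_succ_top (Nat.le_add_left 1 n), ← ih, hMrec, ← smul_vecMulVec,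
      vecMulVec_eq Unit, det_add_replicateCol_mul_replicateRow hdet.ne'.isUnit, Matrix.mul_assoc,
      ← replicateCol_mulVec (ι := Unit), det_unique (n := Unit)]
    simp [mulVec_smul]

theorem trace_eq_of_rankOne_updates (n : ℕ) :
    (M n).trace = Fintype.card ι + c * ∑ s ∈ Finset.Icc 1 n, x s ⬝ᵥ x s := by
  induction n with
  | zero => simp [hM0]
  | succ n ih =>
    rw [hMrec, trace_add, trace_smul, trace_vecMulVec, ih,
      Finset.sum_Icc_succ_top (Nat.le_add_left 1 n), smul_eq_mul]
    ring

theorem sum_dotProduct_inv_mulVec_mul_log_le [Nonempty ι] (hc : 0 ≤ c) (T : ℕ)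
    (hx : ∀ s ∈ Finset.Icc 1 T, x s ⬝ᵥ x s ≤ 1) :
    (∑ s ∈ Finset.Icc 1 T, x s ⬝ᵥ (M (s - 1))⁻¹ *ᵥ x s) * Real.log (1 + c) ≤
      Fintype.card ι * Real.log (1 + c * T / Fintype.card ι) := by
  have hM1 := posSemidef_sub_one_of_rankOne_updates hM0 hMrec hc
  have hv₀ (s : ℕ) := (hM1 (s - 1)).posDef_of_sub_one.dotProduct_inv_mulVec_nonneg (x s)
  have hn : (0 : ℝ) < Fintype.card ι := by exact_mod_cast Fintype.card_pos
  have htrace : (M T).trace ≤ Fintype.card ι + c * T := by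
    rw [trace_eq_of_rankOne_updates hM0 hMrec]
    gcongr
    simpa using Finset.sum_le_sum hx
  calc (∑ s ∈ Finset.Icc 1 T, x s ⬝ᵥ (M (s - 1))⁻¹ *ᵥ x s) * Real.log (1 + c)
      ≤ ∑ s ∈ Finset.Icc 1 T, Real.log (1 + c * (x s ⬝ᵥ (M (s - 1))⁻¹ *ᵥ x s)) := by
        rw [Finset.sum_mul]
        exact Finset.sum_le_sum fun s hs => mul_log_one_add_le_log_one_add_mul (by linarith)
          (hv₀ s) (((hM1 (s - 1)).dotProduct_inv_mulVec_le (x s)).trans (hx s hs))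
    _ = Real.log (M T).det := by
        rw [det_eq_prod_of_rankOne_updates hM0 hMrec hc, Real.log_prod fun s _ => by
          have := mul_nonneg hc (hv₀ s); positivity]
    _ ≤ Fintype.card ι * Real.log ((M T).trace / Fintype.card ι) :=
        (hM1 T).posDef_of_sub_one.log_det_le
    _ ≤ Fintype.card ι * Real.log (1 + c * T / Fintype.card ι) := by
        gcongr
        · exact div_pos (hM1 T).posDef_of_sub_one.trace_pos hn
        · rwa [div_le_iff₀ hn, add_mul, div_mul_cancel₀ _ hn.ne', one_mul]

end RankOneUpdates

theorem sum_confidence_widths_bound (d T : ℕ) (hd : 1 ≤ d) (σ : ℝ) (hσ : 0 < σ)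
    (x : ℕ → Fin d → ℝ) (hx : ∀ s ∈ Finset.Icc 1 T, Real.sqrt (x s ⬝ᵥ x s) ≤ 1)
    (M : ℕ → Matrix (Fin d) (Fin d) ℝ) (hM0 : M 0 = 1)
    (hMrec : ∀ s, M (s + 1) = M s + (σ ^ 2)⁻¹ • vecMulVec (x (s + 1)) (x (s + 1)))
    (z : ℕ → ℝ) (hz : ∀ s, z s = Real.sqrt (x s ⬝ᵥ (M (s - 1))⁻¹ *ᵥ x s)) :
    ∑ s ∈ Finset.Icc 1 T, z s ≤
      Real.sqrt (T * (d * Real.log (1 + T / (d * σ ^ 2)) / Real.log (1 + 1 / σ ^ 2))) := by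
  have : Nonempty (Fin d) := ⟨⟨0, hd⟩⟩
  have hc : 0 < (σ ^ 2)⁻¹ := by positivity
  have hv₀ (s : ℕ) := (posSemidef_sub_one_of_rankOne_updates hM0 hMrec hc.le
    (s - 1)).posDef_of_sub_one.dotProduct_inv_mulVec_nonneg (x s)
  have hpotential := sum_dotProduct_inv_mulVec_mul_log_le hM0 hMrec hc.le T
    fun s hs => Real.sqrt_le_one.1 (hx s hs)
  rw [Fintype.card_fin, inv_eq_one_div, show 1 / σ ^ 2 * T / d = T / (d * σ ^ 2) by ring,
    ← le_div_iff₀ (Real.log_pos (lt_add_of_pos_right 1 (by positivity)))] at hpotential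
  calc ∑ s ∈ Finset.Icc 1 T, z s
      = ∑ s ∈ Finset.Icc 1 T, √(x s ⬝ᵥ (M (s - 1))⁻¹ *ᵥ x s) :=
        Finset.sum_congr rfl fun s _ => hz s
    _ ≤ √(T * ∑ s ∈ Finset.Icc 1 T, x s ⬝ᵥ (M (s - 1))⁻¹ *ᵥ x s) := by
        simpa using Real.sum_sqrt_le_sqrt_card_mul_sum (Finset.Icc 1 T) hv₀
    _ ≤ _ := by gcongr
end

section
/- For any K-tuple A = (a_1,...,a_K) and weights w : E → {0,1}, writing f(A,w) = 1 − ∏_{k=1}^K (1 − w(a_k)), the difference f(A*, w) − f(A, w) for any two K-tuples A*, A of distinct items satisfies f(A*,w) − f(A,w) ≤ ∑_{k=1}^K [∏_{i=1}^{k−1}(1 − w(a_i))]·(w(a*_k) − w(a_k)). -/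
open Finset

namespace Finset

variable {ι R : Type*} [LinearOrder ι]

theorem prod_sub_prod_eq_sum_ordered [CommRing R] (s : Finset ι) (f g : ι → R) :
    ∏ i ∈ s, f i - ∏ i ∈ s, g i =
      ∑ i ∈ s, (∏ j ∈ s with j < i, f j) * (f i - g i) * ∏ j ∈ s with i < j, g j := by
  have h := prod_add_ordered s g (fun i => f i - g i)
  simp only [add_sub_cancel] at h
  rw [h, add_sub_cancel_left]
  exact sum_congr rfl fun i _ => by ring

theorem prod_sub_prod_le_sum_ordered [CommRing R] [PartialOrder R] [IsOrderedRing R]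
    (s : Finset ι) {f g : ι → R} (hg0 : ∀ i ∈ s, 0 ≤ g i) (hg1 : ∀ i ∈ s, g i ≤ 1)
    (hgf : ∀ i ∈ s, g i ≤ f i) :
    ∏ i ∈ s, f i - ∏ i ∈ s, g i ≤ ∑ i ∈ s, (∏ j ∈ s with j < i, f j) * (f i - g i) := by
  rw [prod_sub_prod_eq_sum_ordered]
  refine sum_le_sum fun i hi => mul_le_of_le_one_right ?_ ?_
  · exact mul_nonneg (prod_nonneg fun j hj => (hg0 j (mem_filter.1 hj).1).trans
      (hgf j (mem_filter.1 hj).1)) (sub_nonneg.2 (hgf i hi))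
  · exact prod_le_one (fun j hj => hg0 j (mem_filter.1 hj).1)
      fun j hj => hg1 j (mem_filter.1 hj).1

end Finset

theorem cascade_regret_decomposition (E : Type*) (K : ℕ) (w : E → ℝ)
    (hw0 : ∀ e, 0 ≤ w e) (hw1 : ∀ e, w e ≤ 1)
    (A Astar : Fin K → E) (hbc : ∀ k, w (A k) ≤ w (Astar k)) :
    (1 - ∏ k : Fin K, (1 - w (Astar k))) - (1 - ∏ k : Fin K, (1 - w (A k))) ≤
      ∑ k : Fin K, (∏ i ∈ Finset.Iio k, (1 - w (A i))) * (w (Astar k) - w (A k)) := by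
  have h := prod_sub_prod_le_sum_ordered univ (f := fun k => 1 - w (A k))
    (g := fun k => 1 - w (Astar k)) (fun k _ => sub_nonneg.2 (hw1 _))
    (fun k _ => sub_le_self _ (hw0 _)) (fun k _ => sub_le_sub_left (hbc k) 1)
  simpa only [sub_sub_sub_cancel_left, filter_gt_eq_Iio] using h
end
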